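/- arXiv:1709.01108 — 2 statements merged into one kernel-verified Lean document; each statement's English description precedes it below -/
import Mathlib

section
/- For the three-body problem with masses m_1, m_2, m_3 > 0, the determinant of the 3×3 contravariant metric tensor g^{μν} (with diagonal entries 2((m_i+m_j)/(m_i m_j)) ρ_{ij} and off-diagonal entries (ρ_{ij} + ρ_{ik} - ρ_{jk})/m_i) equals 2 ((m_1+m_2+m_3)/(m_1^2 m_2^2 m_3^2)) · (m_1 m_2 ρ_{12} + m_1 m_3 ρ_{13} + m_2 m_3 ρ_{23}) · (2ρ_{12}ρ_{13} + 2ρ_{12}ρ_{23} + 2ρ_{13}ρ_{23} - ρ_{12}^2 - ρ_{13}^2 - ρ_{23}^2). -/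
open Matrix

/-- Determinant of the three-body contravariant metric tensor. -/
theorem threeBody_metric_det
    (m₁ m₂ m₃ : ℝ) (hm₁ : 0 < m₁) (hm₂ : 0 < m₂) (hm₃ : 0 < m₃)
    (ρ₁₂ ρ₁₃ ρ₂₃ : ℝ) :
    (!![2 * (m₁ + m₂) / (m₁ * m₂) * ρ₁₂, (ρ₁₂ + ρ₁₃ - ρ₂₃) / m₁,
          (ρ₁₂ + ρ₂₃ - ρ₁₃) / m₂;
        (ρ₁₂ + ρ₁₃ - ρ₂₃) / m₁, 2 * (m₁ + m₃) / (m₁ * m₃) * ρ₁₃,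
          (ρ₁₃ + ρ₂₃ - ρ₁₂) / m₃;
        (ρ₁₂ + ρ₂₃ - ρ₁₃) / m₂, (ρ₁₃ + ρ₂₃ - ρ₁₂) / m₃,
          2 * (m₂ + m₃) / (m₂ * m₃) * ρ₂₃] : Matrix (Fin 3) (Fin 3) ℝ).det =
      2 * ((m₁ + m₂ + m₃) / (m₁ ^ 2 * m₂ ^ 2 * m₃ ^ 2)) *
        (m₁ * m₂ * ρ₁₂ + m₁ * m₃ * ρ₁₃ + m₂ * m₃ * ρ₂₃) *
        (2 * ρ₁₂ * ρ₁₃ + 2 * ρ₁₂ * ρ₂₃ + 2 * ρ₁₃ * ρ₂₃ -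
          ρ₁₂ ^ 2 - ρ₁₃ ^ 2 - ρ₂₃ ^ 2) := by
  have h1 := hm₁.ne'
  have h2 := hm₂.ne'
  have h3 := hm₃.ne'
  rw [Matrix.det_fin_three]
  simp only [Matrix.of_apply, Matrix.cons_val', Matrix.cons_val_zero, Matrix.cons_val_one,
    Matrix.head_cons, Matrix.empty_val', Matrix.cons_val_fin_one, Matrix.head_fin_const,
    Matrix.cons_val_two, Matrix.tail_cons]
  field_simp
  ring
end

section
/- For points r_1, r_2, r_3 in R^d with d ≥ 2, the contravariant metric tensor g^{μν} of the three-body radial Laplacian (as in the paper, a 3×3 matrix in the ρ variables) is positive semidefinite, and it is positive definite whenever the three points are not collinear. -/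
/-!
`g^{μν} = ½ Σᵢ (1/mᵢ) ∇ᵢρ_μ · ∇ᵢρ_ν` is the Gram matrix of the gradients of the three
squared distances with respect to the mass-weighted Euclidean metric on configuration space. A Gram
matrix is positive semidefinite, and positive definite iff its vectors are linearly independent.
The `r₁`-components of the gradients of `ρ₁₂` and `ρ₁₃` are `2 (r₁ - r₂)` and `2 (r₁ - r₃)`, which are
independent for non-collinear points, and then the `r₂`-component `2 (r₂ - r₃)` of `∇ρ₂₃` finishes.
-/

open Matrix Finset

lemma inner_sub_sub_eq {E : Type*} [NormedAddCommGroup E] [InnerProductSpace ℝ E] (a b c : E) :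
    inner ℝ (a - b) (a - c) = (‖a - b‖ ^ 2 + ‖a - c‖ ^ 2 - ‖b - c‖ ^ 2) / 2 := by
  rw [real_inner_eq_norm_mul_self_add_norm_mul_self_sub_norm_sub_mul_self_div_two,
    sub_sub_sub_cancel_left, norm_sub_rev c b]
  ring

lemma AffineIndependent.eq_zero_of_smul_sub_add_smul_sub_eq_zero {k V : Type*} [Ring k]
    [AddCommGroup V] [Module k V] {p₁ p₂ p₃ : V} (h : AffineIndependent k ![p₁, p₂, p₃])
    {a b : k} (hab : a • (p₁ - p₂) + b • (p₁ - p₃) = 0) : a = 0 ∧ b = 0 := by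
  have hw := affineIndependent_iff.1 h univ ![a + b, -a, -b] (by simp [Fin.sum_univ_three]) (by
    rw [Fin.sum_univ_three, ← hab]
    simp only [cons_val_zero, cons_val_one, cons_val_two, head_cons, tail_cons, smul_sub,
      add_smul, neg_smul]
    abel)
  exact ⟨neg_eq_zero.1 (hw 1 (mem_univ _)), neg_eq_zero.1 (hw 2 (mem_univ _))⟩

noncomputable def threeBodyMetric (m₁ m₂ m₃ ρ₁₂ ρ₁₃ ρ₂₃ : ℝ) : Matrix (Fin 3) (Fin 3) ℝ :=
  !![2 * (m₁ + m₂) / (m₁ * m₂) * ρ₁₂, (ρ₁₂ + ρ₁₃ - ρ₂₃) / m₁, (ρ₁₂ + ρ₂₃ - ρ₁₃) / m₂;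
    (ρ₁₂ + ρ₁₃ - ρ₂₃) / m₁, 2 * (m₁ + m₃) / (m₁ * m₃) * ρ₁₃, (ρ₁₃ + ρ₂₃ - ρ₁₂) / m₃;
    (ρ₁₂ + ρ₂₃ - ρ₁₃) / m₂, (ρ₁₃ + ρ₂₃ - ρ₁₂) / m₃, 2 * (m₂ + m₃) / (m₂ * m₃) * ρ₂₃]

section

variable {E : Type*} [NormedAddCommGroup E] [InnerProductSpace ℝ E]

/-- Component `i` of vector `μ` is `∇_{rᵢ} ρ_μ / √(2 mᵢ)`, where `(ρ₀, ρ₁, ρ₂) = (ρ₁₂, ρ₁₃, ρ₂₃)`. -/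
noncomputable def massWeightedGradient (m₁ m₂ m₃ : ℝ) (r₁ r₂ r₃ : E) :
    Fin 3 → WithLp 2 (Fin 3 → E) :=
  ![WithLp.toLp 2 ![√(2 / m₁) • (r₁ - r₂), √(2 / m₂) • (r₂ - r₁), 0],
    WithLp.toLp 2 ![√(2 / m₁) • (r₁ - r₃), 0, √(2 / m₃) • (r₃ - r₁)],
    WithLp.toLp 2 ![0, √(2 / m₂) • (r₂ - r₃), √(2 / m₃) • (r₃ - r₂)]]

variable {m₁ m₂ m₃ : ℝ} (r₁ r₂ r₃ : E)

lemma gram_massWeightedGradient (hm₁ : 0 < m₁) (hm₂ : 0 < m₂) (hm₃ : 0 < m₃) :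
    gram ℝ (massWeightedGradient m₁ m₂ m₃ r₁ r₂ r₃) =
      threeBodyMetric m₁ m₂ m₃ (‖r₁ - r₂‖ ^ 2) (‖r₁ - r₃‖ ^ 2) (‖r₂ - r₃‖ ^ 2) := by
  have hsq (m : ℝ) (hm : 0 < m) : √(2 / m) * √(2 / m) = 2 / m :=
    Real.mul_self_sqrt (by positivity)
  ext μ ν
  fin_cases μ <;> fin_cases ν <;>
    simp only [Fin.zero_eta, Fin.mk_one, Fin.reduceFinMk, Fin.isValue, gram_apply, of_apply,
      massWeightedGradient, threeBodyMetric, PiLp.inner_apply, Fin.sum_univ_three, cons_val',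
      cons_val_zero, cons_val_one, cons_val_two, head_cons, tail_cons, empty_val',
      cons_val_fin_one, head_fin_const, real_inner_smul_left, real_inner_smul_right,
      inner_zero_left, inner_zero_right, ← mul_assoc, hsq _ hm₁, hsq _ hm₂, hsq _ hm₃] <;>
    simp only [real_inner_self_eq_norm_sq, inner_sub_sub_eq, norm_sub_rev r₂ r₁,
      norm_sub_rev r₃ r₁, norm_sub_rev r₃ r₂] <;>
    field_simp <;>
    ring

lemma linearIndependent_massWeightedGradient (hm₁ : 0 < m₁) (hm₂ : 0 < m₂)
    (h : AffineIndependent ℝ ![r₁, r₂, r₃]) :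
    LinearIndependent ℝ (massWeightedGradient m₁ m₂ m₃ r₁ r₂ r₃) := by
  rw [Fintype.linearIndependent_iff]
  intro x hx
  have hcomp (i : Fin 3) := congrArg (fun w : WithLp 2 (Fin 3 → E) => w i) hx
  have h₁ : √(2 / m₁) • (x 0 • (r₁ - r₂) + x 1 • (r₁ - r₃)) = 0 := by
    simpa [massWeightedGradient, Fin.sum_univ_three, smul_comm (x _)] using hcomp 0
  have h₂ : √(2 / m₂) • (x 0 • (r₂ - r₁) + x 2 • (r₂ - r₃)) = 0 := by
    simpa [massWeightedGradient, Fin.sum_univ_three, smul_comm (x _)] using hcomp 1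
  obtain ⟨hx₀, hx₁⟩ := h.eq_zero_of_smul_sub_add_smul_sub_eq_zero
    ((smul_eq_zero.1 h₁).resolve_left (by positivity))
  have hx₂ : x 2 = 0 := by
    have h₂' := (smul_eq_zero.1 h₂).resolve_left (by positivity)
    rw [hx₀, zero_smul, zero_add] at h₂'
    exact (smul_eq_zero.1 h₂').resolve_right
      (sub_ne_zero.2 (h.injective.ne (show (1 : Fin 3) ≠ 2 by decide)))
  intro μ
  fin_cases μ <;> assumption

end

theorem threeBody_metric_posDef_general
    {d : ℕ}
    (m₁ m₂ m₃ : ℝ) (hm₁ : 0 < m₁) (hm₂ : 0 < m₂) (hm₃ : 0 < m₃)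
    (r₁ r₂ r₃ : EuclideanSpace ℝ (Fin d))
    (ρ₁₂ ρ₁₃ ρ₂₃ : ℝ)
    (h₁₂ : ρ₁₂ = ‖r₁ - r₂‖ ^ 2) (h₁₃ : ρ₁₃ = ‖r₁ - r₃‖ ^ 2)
    (h₂₃ : ρ₂₃ = ‖r₂ - r₃‖ ^ 2)
    (g : Matrix (Fin 3) (Fin 3) ℝ)
    (hg : g = !![2 * (m₁ + m₂) / (m₁ * m₂) * ρ₁₂, (ρ₁₂ + ρ₁₃ - ρ₂₃) / m₁,
          (ρ₁₂ + ρ₂₃ - ρ₁₃) / m₂;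
        (ρ₁₂ + ρ₁₃ - ρ₂₃) / m₁, 2 * (m₁ + m₃) / (m₁ * m₃) * ρ₁₃,
          (ρ₁₃ + ρ₂₃ - ρ₁₂) / m₃;
        (ρ₁₂ + ρ₂₃ - ρ₁₃) / m₂, (ρ₁₃ + ρ₂₃ - ρ₁₂) / m₃,
          2 * (m₂ + m₃) / (m₂ * m₃) * ρ₂₃]) :
    g.PosSemidef ∧ (¬ Collinear ℝ ({r₁, r₂, r₃} : Set (EuclideanSpace ℝ (Fin d))) →
      g.PosDef) := by
  have hgram : g = gram ℝ (massWeightedGradient m₁ m₂ m₃ r₁ r₂ r₃) := by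
    rw [gram_massWeightedGradient r₁ r₂ r₃ hm₁ hm₂ hm₃, hg, h₁₂, h₁₃, h₂₃]
    rfl
  rw [hgram]
  exact ⟨posSemidef_gram ℝ _, fun h => posDef_gram_of_linearIndependent
    (linearIndependent_massWeightedGradient r₁ r₂ r₃ hm₁ hm₂
      (affineIndependent_iff_not_collinear_set.2 h))⟩

/-- The three-body contravariant metric tensor, evaluated at squared distances of
actual points `r₁ r₂ r₃ ∈ ℝ^d` (`d ≥ 2`), is positive semidefinite, and positive
definite whenever the three points are not collinear. -/
theorem threeBody_metric_posDef
    {d : ℕ} (hd : 2 ≤ d)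
    (m₁ m₂ m₃ : ℝ) (hm₁ : 0 < m₁) (hm₂ : 0 < m₂) (hm₃ : 0 < m₃)
    (r₁ r₂ r₃ : EuclideanSpace ℝ (Fin d))
    (ρ₁₂ ρ₁₃ ρ₂₃ : ℝ)
    (h₁₂ : ρ₁₂ = ‖r₁ - r₂‖ ^ 2) (h₁₃ : ρ₁₃ = ‖r₁ - r₃‖ ^ 2)
    (h₂₃ : ρ₂₃ = ‖r₂ - r₃‖ ^ 2)
    (g : Matrix (Fin 3) (Fin 3) ℝ)
    (hg : g = !![2 * (m₁ + m₂) / (m₁ * m₂) * ρ₁₂, (ρ₁₂ + ρ₁₃ - ρ₂₃) / m₁,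
          (ρ₁₂ + ρ₂₃ - ρ₁₃) / m₂;
        (ρ₁₂ + ρ₁₃ - ρ₂₃) / m₁, 2 * (m₁ + m₃) / (m₁ * m₃) * ρ₁₃,
          (ρ₁₃ + ρ₂₃ - ρ₁₂) / m₃;
        (ρ₁₂ + ρ₂₃ - ρ₁₃) / m₂, (ρ₁₃ + ρ₂₃ - ρ₁₂) / m₃,
          2 * (m₂ + m₃) / (m₂ * m₃) * ρ₂₃]) :
    g.PosSemidef ∧ (¬ Collinear ℝ ({r₁, r₂, r₃} : Set (EuclideanSpace ℝ (Fin d))) →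
      g.PosDef) :=
  threeBody_metric_posDef_general m₁ m₂ m₃ hm₁ hm₂ hm₃ r₁ r₂ r₃ ρ₁₂ ρ₁₃ ρ₂₃ h₁₂ h₁₃ h₂₃ g hg
end
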